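/- Define erfc(z) := (2/√π) ∫_z^∞ e^{-s²} ds for z ∈ ℝ. Then there exist constants C > 0 and t₀ > 0 such that for all t ≥ t₀: | ∫_t^∞ T(x,x) dx − (1/√(2π)) · erfc(√2·t)/(8t) | ≤ C · t^{-3} · erfc(√2·t). In particular, ∫_t^∞ T(x,x) dx = (1/√(2π)) · erfc(√2 t)/(8t) · (1 + O(t^{-2})) as t → +∞. -/

import Mathlib

open MeasureTheory

/-- The kernel `T(x,y) = (1/π) ∫₀^∞ e^{-(x+u)²} e^{-(y+u)²} du`. -/
noncomputable def Tker (x y : ℝ) : ℝ :=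
  (1 / Real.pi) * ∫ u in Set.Ioi (0 : ℝ), Real.exp (-(x + u) ^ 2) * Real.exp (-(y + u) ^ 2)

/-- The complementary error function `erfc(z) = (2/√π) ∫_z^∞ e^{-s²} ds`. -/
noncomputable def erfc (z : ℝ) : ℝ :=
  (2 / Real.sqrt Real.pi) * ∫ s in Set.Ioi z, Real.exp (-s ^ 2)

open MeasureTheory Real Set Filter Topology

noncomputable def Eint (z : ℝ) : ℝ := ∫ s in Set.Ioi z, Real.exp (-s ^ 2)
noncomputable def Fint (t : ℝ) : ℝ := ∫ v in Set.Ioi t, Real.exp (-(2 * v ^ 2))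
noncomputable def Jint (z : ℝ) : ℝ := ∫ s in Set.Ioi z, Real.exp (-s ^ 2) / s ^ 2

lemma intE : Integrable fun s : ℝ => Real.exp (-s ^ 2) := by
  simpa using integrable_exp_neg_mul_sq one_pos

lemma intG2 : Integrable fun v : ℝ => Real.exp (-(2 * v ^ 2)) := by
  simpa [neg_mul] using integrable_exp_neg_mul_sq (b := 2) two_pos

lemma E_nonneg (z : ℝ) : 0 ≤ Eint z :=
  setIntegral_nonneg measurableSet_Ioi fun s _ => (Real.exp_pos _).le

lemma hasDerivAt_Ioi_integral {g : ℝ → ℝ} (hc : Continuous g) (hi : Integrable g) (x : ℝ) :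
    HasDerivAt (fun y => ∫ v in Set.Ioi y, g v) (-g x) x := by
  have key : ∀ y : ℝ, (∫ v in Set.Ioi y, g v)
      = (∫ v, g v) - ((∫ v in Set.Iic x, g v) + ∫ v in x..y, g v) := by
    intro y
    rw [← intervalIntegral.integral_Iic_sub_Iic hi.integrableOn hi.integrableOn]
    have h2 := intervalIntegral.integral_Iic_add_Ioi (b := y) hi.integrableOn hi.integrableOn
    linarith
  have hI : HasDerivAt (fun y => ∫ v in x..y, g v) (g x) x :=
    intervalIntegral.integral_hasDerivAt_right hi.intervalIntegrable
      hc.stronglyMeasurable.stronglyMeasurableAtFilter hc.continuousAt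
  have := ((hI.const_add (∫ v in Set.Iic x, g v)).const_sub (∫ v, g v))
  rw [funext key]
  simpa using this

lemma contG2 : Continuous fun v : ℝ => Real.exp (-(2 * v ^ 2)) := by continuity

lemma contE' : Continuous fun s : ℝ => Real.exp (-s ^ 2) := by continuity

lemma hasDerivAt_Fint (x : ℝ) : HasDerivAt Fint (-Real.exp (-(2 * x ^ 2))) x :=
  hasDerivAt_Ioi_integral contG2 intG2 x

lemma cont_Fint : Continuous Fint :=
  continuous_iff_continuousAt.2 fun x => (hasDerivAt_Fint x).continuousAt

lemma Fint_nonneg (x : ℝ) : 0 ≤ Fint x :=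
  setIntegral_nonneg measurableSet_Ioi fun s _ => (Real.exp_pos _).le

lemma Fint_le (x : ℝ) (hx : 0 ≤ x) : Fint x ≤ Real.sqrt Real.pi * Real.exp (-x ^ 2) := by
  have h1 : Fint x ≤ ∫ v in Set.Ioi x, Real.exp (-x ^ 2) * Real.exp (-v ^ 2) := by
    apply setIntegral_mono_on intG2.integrableOn
      ((intE.const_mul _).integrableOn) measurableSet_Ioi
    intro v hv
    rw [← Real.exp_add]
    apply Real.exp_le_exp.2
    have : x ≤ v := (le_of_lt hv)
    nlinarith
  have h2 : (∫ v in Set.Ioi x, Real.exp (-x ^ 2) * Real.exp (-v ^ 2))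
      = Real.exp (-x ^ 2) * Eint x := by
    rw [MeasureTheory.integral_const_mul]; rfl
  have h3 : Eint x ≤ Real.sqrt Real.pi := by
    have h4 : Eint x ≤ ∫ s : ℝ, Real.exp (-s ^ 2) :=
      setIntegral_le_integral intE (Filter.Eventually.of_forall fun s => (Real.exp_pos _).le)
    calc Eint x ≤ ∫ s : ℝ, Real.exp (-s ^ 2) := h4
    _ = Real.sqrt Real.pi := by
        simpa using integral_gaussian 1
  calc Fint x ≤ Real.exp (-x ^ 2) * Eint x := h1.trans_eq h2
  _ ≤ Real.exp (-x ^ 2) * Real.sqrt Real.pi := by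
      exact mul_le_mul_of_nonneg_left h3 (Real.exp_pos _).le
  _ = _ := mul_comm _ _

lemma Fint_integrableOn {t : ℝ} (ht : 0 ≤ t) : IntegrableOn Fint (Set.Ioi t) := by
  apply Integrable.mono ((intE.const_mul (Real.sqrt Real.pi)).integrableOn (s := Set.Ioi t))
    (cont_Fint.aestronglyMeasurable.restrict)
  rw [ae_restrict_iff' measurableSet_Ioi]
  refine Filter.Eventually.of_forall fun x hx => ?_
  have hx0 : 0 ≤ x := ht.trans hx.le
  rw [Real.norm_of_nonneg (Fint_nonneg x), Real.norm_of_nonneg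
    (by positivity : (0:ℝ) ≤ Real.sqrt Real.pi * Real.exp (-x ^ 2))]
  exact Fint_le x hx0

lemma tendsto_exp_neg_two_sq : Tendsto (fun x : ℝ => Real.exp (-(2 * x ^ 2))) atTop (𝓝 0) := by
  apply Real.tendsto_exp_atBot.comp
  apply Filter.tendsto_neg_atBot_iff.mpr
  exact (tendsto_pow_atTop (two_ne_zero)).const_mul_atTop two_pos

lemma tendsto_sq_mul_exp : Tendsto (fun x : ℝ => x ^ 2 * Real.exp (-x ^ 2)) atTop (𝓝 0) := by
  have h := (tendsto_pow_mul_exp_neg_atTop_nhds_zero 1).comp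
    (tendsto_pow_atTop (two_ne_zero (α := ℕ)) : Tendsto (fun x : ℝ => x ^ 2) atTop atTop)
  simpa [Function.comp_def] using h

lemma tendsto_mul_Fint : Tendsto (fun x : ℝ => x * Fint x) atTop (𝓝 0) := by
  apply squeeze_zero' (g := fun x => Real.sqrt Real.pi * (x ^ 2 * Real.exp (-x ^ 2)))
  · filter_upwards [eventually_ge_atTop (1 : ℝ)] with x hx
    exact mul_nonneg (by linarith) (Fint_nonneg x)
  · filter_upwards [eventually_ge_atTop (1 : ℝ)] with x hx
    have h1 : x * Fint x ≤ x * (Real.sqrt Real.pi * Real.exp (-x ^ 2)) :=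
      mul_le_mul_of_nonneg_left (Fint_le x (by linarith)) (by linarith)
    have h2 : x * (Real.sqrt Real.pi * Real.exp (-x ^ 2))
        ≤ Real.sqrt Real.pi * (x ^ 2 * Real.exp (-x ^ 2)) := by
      have : x ≤ x ^ 2 := by nlinarith
      have := mul_le_mul_of_nonneg_right this (Real.exp_pos (-x ^ 2)).le
      nlinarith [Real.sqrt_nonneg Real.pi]
    linarith
  · simpa using tendsto_sq_mul_exp.const_mul (Real.sqrt Real.pi)

lemma integral_tail_Fint {t : ℝ} (ht : 0 < t) :
    ∫ x in Set.Ioi t, Fint x = Real.exp (-(2 * t ^ 2)) / 4 - t * Fint t := by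
  have key := integral_Ioi_of_hasDerivAt_of_tendsto'
    (f := fun x => x * Fint x - Real.exp (-(2 * x ^ 2)) / 4) (f' := Fint) (a := t) (m := 0)
    ?_ (Fint_integrableOn ht.le) ?_
  · rw [key]; ring
  · intro x _
    have h1 : HasDerivAt (fun y : ℝ => y * Fint y)
        (1 * Fint x + x * -Real.exp (-(2 * x ^ 2))) x :=
      (hasDerivAt_id x).mul (hasDerivAt_Fint x)
    have h2 : HasDerivAt (fun y : ℝ => Real.exp (-(2 * y ^ 2)) / 4)
        (Real.exp (-(2 * x ^ 2)) * -(2 * (2 * x ^ 1)) / 4) x := by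
      exact (((hasDerivAt_pow 2 x).const_mul 2).neg.exp).div_const 4
    have := h1.sub h2
    convert this using 1
    · rfl
    · ring
  · have := tendsto_mul_Fint.sub (tendsto_exp_neg_two_sq.div_const 4)
    simpa using this

lemma intJ {z : ℝ} (hz : 0 < z) :
    IntegrableOn (fun s => Real.exp (-s ^ 2) / s ^ 2) (Set.Ioi z) := by
  apply Integrable.mono ((intE.const_mul (z ^ 2)⁻¹).integrableOn (s := Set.Ioi z))
  · apply ContinuousOn.aestronglyMeasurable _ measurableSet_Ioi
    apply ContinuousOn.div contE'.continuousOn (continuous_pow 2).continuousOn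
    intro s hs
    exact pow_ne_zero _ (ne_of_gt (hz.trans hs))
  · rw [ae_restrict_iff' measurableSet_Ioi]
    refine Filter.Eventually.of_forall fun s hs => ?_
    have hs0 : 0 < s := hz.trans hs
    rw [Real.norm_of_nonneg (by positivity), Real.norm_of_nonneg (by positivity),
      inv_mul_eq_div]
    exact div_le_div_of_nonneg_left (Real.exp_pos _).le (by positivity)
      (by nlinarith [(show z < s from hs).le])

lemma EJ_identity {z : ℝ} (hz : 0 < z) :
    Real.exp (-z ^ 2) = 2 * z * Eint z + z * Jint z := by
  have key := integral_Ioi_of_hasDerivAt_of_tendsto'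
    (f := fun s => -Real.exp (-s ^ 2) / (2 * s))
    (f' := fun s => Real.exp (-s ^ 2) + Real.exp (-s ^ 2) / s ^ 2 / 2) (a := z) (m := 0)
    ?_ ?_ ?_
  · have hsplit : (∫ s in Set.Ioi z,
        (Real.exp (-s ^ 2) + Real.exp (-s ^ 2) / s ^ 2 / 2)) = Eint z + Jint z / 2 := by
      rw [MeasureTheory.integral_add intE.integrableOn ((intJ hz).div_const 2)]
      congr 1
      rw [MeasureTheory.integral_div]
      rfl
    rw [hsplit] at key
    have hz' : (2 : ℝ) * z ≠ 0 := by positivity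
    field_simp at key ⊢
    nlinarith [key]
  · intro x hx
    have hx0 : 0 < x := lt_of_lt_of_le hz hx
    have hnum : HasDerivAt (fun s : ℝ => -Real.exp (-s ^ 2))
        (-(Real.exp (-x ^ 2) * -(2 * x ^ 1))) x := ((hasDerivAt_pow 2 x).neg.exp).neg
    have hden : HasDerivAt (fun s : ℝ => 2 * s) 2 x := by
      simpa using (hasDerivAt_id x).const_mul 2
    have := hnum.div hden (by positivity)
    convert this using 1
    · rfl
    · rfl
    · field_simp
      ring
  · exact ((intE.integrableOn).add ((intJ hz).div_const 2))
  · have h1 : Tendsto (fun s : ℝ => -Real.exp (-s ^ 2)) atTop (𝓝 0) := by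
      have : Tendsto (fun s : ℝ => Real.exp (-s ^ 2)) atTop (𝓝 0) := by
        apply Real.tendsto_exp_atBot.comp
        apply Filter.tendsto_neg_atBot_iff.mpr
        exact tendsto_pow_atTop two_ne_zero
      simpa using this.neg
    have h2 : Tendsto (fun s : ℝ => (2 * s)⁻¹) atTop (𝓝 0) := by
      apply Filter.Tendsto.comp tendsto_inv_atTop_zero
      exact (tendsto_id.const_mul_atTop two_pos)
    have := h1.mul h2
    simpa [div_eq_mul_inv] using this

lemma int_mul_exp : Integrable fun s : ℝ => s * Real.exp (-s ^ 2) := by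
  simpa using integrable_mul_exp_neg_mul_sq one_pos

lemma sInt (z : ℝ) : ∫ s in Set.Ioi z, s * Real.exp (-s ^ 2) = Real.exp (-z ^ 2) / 2 := by
  have key := integral_Ioi_of_hasDerivAt_of_tendsto'
    (f := fun s => -(Real.exp (-s ^ 2) / 2))
    (f' := fun s => s * Real.exp (-s ^ 2)) (a := z) (m := 0)
    ?_ int_mul_exp.integrableOn ?_
  · rw [key]; ring
  · intro x _
    have : HasDerivAt (fun s : ℝ => -(Real.exp (-s ^ 2) / 2))
        (-(Real.exp (-x ^ 2) * -(2 * x ^ 1) / 2)) x := (((hasDerivAt_pow 2 x).neg.exp).div_const 2).neg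
    convert this using 1
    · rfl
    · rfl
    · ring
  · have : Tendsto (fun s : ℝ => Real.exp (-s ^ 2)) atTop (𝓝 0) := by
      apply Real.tendsto_exp_atBot.comp
      apply Filter.tendsto_neg_atBot_iff.mpr
      exact tendsto_pow_atTop two_ne_zero
    simpa using (this.div_const 2).neg

lemma J_nonneg {z : ℝ} (hz : 0 < z) : 0 ≤ Jint z :=
  setIntegral_nonneg measurableSet_Ioi fun s hs => by positivity

lemma zsqJ_le_E {z : ℝ} (hz : 0 < z) : z ^ 2 * Jint z ≤ Eint z := by
  have : z ^ 2 * Jint z = ∫ s in Set.Ioi z, z ^ 2 * (Real.exp (-s ^ 2) / s ^ 2) := by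
    rw [MeasureTheory.integral_const_mul]; rfl
  rw [this]
  apply setIntegral_mono_on ((intJ hz).const_mul _) intE.integrableOn measurableSet_Ioi
  intro s hs
  have hs0 : 0 < s := hz.trans hs
  rw [mul_div_assoc', div_le_iff₀ (by positivity)]
  nlinarith [mul_le_mul_of_nonneg_right (by nlinarith [(show z < s from hs).le] : z ^ 2 ≤ s ^ 2)
    (Real.exp_pos (-s ^ 2)).le]

lemma E_sub_le_J {z : ℝ} (hz : 0 < z) : Eint z - z ^ 2 * Jint z ≤ Jint z := by
  have hint1 : IntegrableOn (fun s => Real.exp (-s ^ 2) - z ^ 2 * (Real.exp (-s ^ 2) / s ^ 2))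
      (Set.Ioi z) := intE.integrableOn.sub ((intJ hz).const_mul _)
  have hint2 : IntegrableOn (fun s => 2 / z * ((s - z) * Real.exp (-s ^ 2))) (Set.Ioi z) := by
    have h0 : IntegrableOn (fun s : ℝ => 2 / z * (s * Real.exp (-s ^ 2))
        - 2 / z * (z * Real.exp (-s ^ 2))) (Set.Ioi z) :=
      (int_mul_exp.integrableOn.const_mul _).sub
        ((intE.integrableOn.const_mul z).const_mul _)
    exact h0.congr_fun (fun s _ => by ring) measurableSet_Ioi
  have hEq : Eint z - z ^ 2 * Jint z
      = ∫ s in Set.Ioi z, (Real.exp (-s ^ 2) - z ^ 2 * (Real.exp (-s ^ 2) / s ^ 2)) := by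
    rw [MeasureTheory.integral_sub intE.integrableOn ((intJ hz).const_mul _),
      MeasureTheory.integral_const_mul]
    rfl
  have hmono : (∫ s in Set.Ioi z, (Real.exp (-s ^ 2) - z ^ 2 * (Real.exp (-s ^ 2) / s ^ 2)))
      ≤ ∫ s in Set.Ioi z, 2 / z * ((s - z) * Real.exp (-s ^ 2)) := by
    apply setIntegral_mono_on hint1 hint2 measurableSet_Ioi
    intro s hs
    have hs0 : 0 < s := hz.trans hs
    have he := (Real.exp_pos (-s ^ 2)).le
    have hL : Real.exp (-s ^ 2) - z ^ 2 * (Real.exp (-s ^ 2) / s ^ 2)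
        = (Real.exp (-s ^ 2) * (s ^ 2 - z ^ 2)) / s ^ 2 := by
      field_simp
    have hR : 2 / z * ((s - z) * Real.exp (-s ^ 2))
        = (2 * ((s - z) * Real.exp (-s ^ 2))) / z := by ring
    rw [hL, hR, div_le_div_iff₀ (by positivity) hz]
    have key : (s ^ 2 - z ^ 2) * z ≤ (s - z) * 2 * s ^ 2 := by
      have h5 : 0 ≤ (s - z) ^ 2 * (2 * s + z) := by positivity
      nlinarith [h5]
    nlinarith [mul_le_mul_of_nonneg_left key he]
  have hRHS : (∫ s in Set.Ioi z, 2 / z * ((s - z) * Real.exp (-s ^ 2))) = Jint z := by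
    rw [MeasureTheory.integral_const_mul]
    have : (∫ s in Set.Ioi z, (s - z) * Real.exp (-s ^ 2))
        = (∫ s in Set.Ioi z, s * Real.exp (-s ^ 2)) - z * Eint z := by
      have hz1 : z * Eint z = ∫ s in Set.Ioi z, z * Real.exp (-s ^ 2) :=
        (MeasureTheory.integral_const_mul z _).symm
      rw [hz1, ← MeasureTheory.integral_sub int_mul_exp.integrableOn
        (intE.integrableOn.const_mul z)]
      congr 1; ext s; ring
    rw [this, sInt]
    have hEJ := EJ_identity hz
    field_simp
    nlinarith [hEJ]
  linarith [hEq ▸ (hmono.trans_eq hRHS)]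

lemma shift_Ioi (g : ℝ → ℝ) (x : ℝ) :
    (∫ u in Set.Ioi (0 : ℝ), g (x + u)) = ∫ v in Set.Ioi x, g v := by
  rw [← integral_indicator measurableSet_Ioi, ← integral_indicator measurableSet_Ioi,
    ← MeasureTheory.integral_add_left_eq_self ((Set.Ioi x).indicator g) x]
  congr 1
  ext u
  by_cases h : 0 < u
  · rw [Set.indicator_of_mem (by simpa using h), Set.indicator_of_mem (by simpa using h)]
  · rw [Set.indicator_of_notMem (by simpa using h), Set.indicator_of_notMem (by simpa using h)]

lemma Tker_diag (x : ℝ) : Tker x x = (1 / Real.pi) * Fint x := by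
  unfold Tker Fint
  congr 1
  calc (∫ u in Set.Ioi (0:ℝ), Real.exp (-(x + u) ^ 2) * Real.exp (-(x + u) ^ 2))
      = ∫ u in Set.Ioi (0:ℝ), (fun v => Real.exp (-(2 * v ^ 2))) (x + u) := by
        congr 1
        ext u
        rw [← Real.exp_add]
        congr 1
        ring
  _ = ∫ v in Set.Ioi x, Real.exp (-(2 * v ^ 2)) := shift_Ioi (fun v => Real.exp (-(2 * v ^ 2))) x

lemma Fint_eq (t : ℝ) : Fint t = (Real.sqrt 2)⁻¹ * Eint (Real.sqrt 2 * t) := by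
  unfold Fint Eint
  have h := integral_comp_mul_left_Ioi (fun s => Real.exp (-s ^ 2)) t
    (b := Real.sqrt 2) (by positivity)
  rw [smul_eq_mul] at h
  rw [← h]
  congr 1
  ext v
  show Real.exp (-(2 * v ^ 2)) = Real.exp (-(Real.sqrt 2 * v) ^ 2)
  rw [mul_pow, Real.sq_sqrt (by norm_num : (0:ℝ) ≤ 2)]

lemma erfc_eq (z : ℝ) : erfc z = 2 / Real.sqrt Real.pi * Eint z := rfl

lemma Eint_eq_erfc (z : ℝ) : Eint z = Real.sqrt Real.pi / 2 * erfc z := by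
  rw [erfc_eq]
  have h : Real.sqrt Real.pi ≠ 0 := by positivity
  field_simp

/-- trace asymptotics
`∫_t^∞ T(x,x) dx = (1/√(2π)) erfc(√2 t)/(8t) (1 + O(t⁻²))` as `t → +∞`. -/
theorem trace_right_tail :
    ∃ C > (0 : ℝ), ∃ t₀ > (0 : ℝ), ∀ t ≥ t₀,
      |(∫ x in Set.Ioi t, Tker x x) -
          (1 / Real.sqrt (2 * Real.pi)) * erfc (Real.sqrt 2 * t) / (8 * t)| ≤
        C * t ^ (-3 : ℤ) * erfc (Real.sqrt 2 * t) := by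
  refine ⟨1, one_pos, 1, one_pos, fun t ht => ?_⟩
  have ht0 : 0 < t := lt_of_lt_of_le one_pos ht
  set z : ℝ := Real.sqrt 2 * t with hzdef
  have h2s : Real.sqrt 2 ^ 2 = 2 := Real.sq_sqrt (by norm_num)
  have hs2pos : (0:ℝ) < Real.sqrt 2 := by positivity
  have hzpos : 0 < z := by positivity
  have hz2 : z ^ 2 = 2 * t ^ 2 := by rw [hzdef, mul_pow, h2s]
  have hz3 : z ^ 3 = 2 * Real.sqrt 2 * t ^ 3 := by
    calc z ^ 3 = Real.sqrt 2 ^ 2 * Real.sqrt 2 * t ^ 3 := by rw [hzdef]; ring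
    _ = 2 * Real.sqrt 2 * t ^ 3 := by rw [h2s]
  have hEJ := EJ_identity hzpos
  have hpi := Real.pi_pos
  -- value of the integral
  have hI : (∫ x in Set.Ioi t, Tker x x) = z * Jint z / (4 * Real.pi) := by
    have h1 : (∫ x in Set.Ioi t, Tker x x) = (1 / Real.pi) * ∫ x in Set.Ioi t, Fint x := by
      simp_rw [Tker_diag]
      rw [MeasureTheory.integral_const_mul]
    rw [h1, integral_tail_Fint ht0, Fint_eq, ← hzdef]
    have hexp : Real.exp (-(2 * t ^ 2)) = Real.exp (-z ^ 2) := by rw [hz2]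
    have htz : t * ((Real.sqrt 2)⁻¹ * Eint z) = z / 2 * Eint z := by
      have hss : Real.sqrt 2 * Real.sqrt 2 = 2 := Real.mul_self_sqrt (by norm_num)
      rw [hzdef]
      field_simp
      linear_combination (-(Eint (t * Real.sqrt 2))) * hss
    rw [hexp, htz, hEJ]
    field_simp
    ring
  -- value of the main term
  have hM : (1 / Real.sqrt (2 * Real.pi)) * erfc z / (8 * t) = Eint z / (4 * Real.pi * z) := by
    have hsqrt : Real.sqrt (2 * Real.pi) * Real.sqrt Real.pi = Real.pi * Real.sqrt 2 := by
      rw [← Real.sqrt_mul (by positivity)]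
      have : 2 * Real.pi * Real.pi = 2 * Real.pi ^ 2 := by ring
      rw [this, Real.sqrt_mul (by norm_num), Real.sqrt_sq hpi.le]
      ring
    rw [erfc_eq]
    have h1 : Real.sqrt (2 * Real.pi) ≠ 0 := by positivity
    have h2 : Real.sqrt Real.pi ≠ 0 := by positivity
    rw [div_eq_div_iff (by positivity) (by positivity)]
    field_simp
    rw [hzdef]
    linear_combination (-(8 * t * Eint (Real.sqrt 2 * t))) * hsqrt
  rw [hI, hM]
  have hJE := zsqJ_le_E hzpos
  have hsub := E_sub_le_J hzpos
  have hJ0 := J_nonneg hzpos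
  have hE0 := E_nonneg z
  have herfc0 : 0 ≤ erfc z := by
    rw [erfc_eq]
    positivity
  -- the difference
  have hdiff : z * Jint z / (4 * Real.pi) - Eint z / (4 * Real.pi * z)
      = (z ^ 2 * Jint z - Eint z) / (4 * Real.pi * z) := by
    field_simp
  rw [hdiff, abs_div, abs_of_nonneg (by positivity : (0:ℝ) ≤ 4 * Real.pi * z),
    abs_of_nonpos (by linarith : z ^ 2 * Jint z - Eint z ≤ 0), neg_sub]
  have hchain : (Eint z - z ^ 2 * Jint z) / (4 * Real.pi * z)
      ≤ Eint z / (4 * Real.pi * z ^ 3) := by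
    rw [div_le_div_iff₀ (by positivity) (by positivity)]
    have h1 : (Eint z - z ^ 2 * Jint z) * z ^ 2 ≤ Eint z := by nlinarith
    have h2 := mul_le_mul_of_nonneg_right h1 (by positivity : (0:ℝ) ≤ 4 * Real.pi * z)
    calc (Eint z - z ^ 2 * Jint z) * (4 * Real.pi * z ^ 3)
        = (Eint z - z ^ 2 * Jint z) * z ^ 2 * (4 * Real.pi * z) := by ring
    _ ≤ Eint z * (4 * Real.pi * z) := h2
  have hfinal : Eint z / (4 * Real.pi * z ^ 3) ≤ 1 * t ^ (-3 : ℤ) * erfc z := by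
    have hzt : (t : ℝ) ^ (-3 : ℤ) = (t ^ 3)⁻¹ := by
      rw [zpow_neg]
      norm_cast
    rw [hzt, one_mul, Eint_eq_erfc, hz3, div_le_iff₀ (by positivity)]
    have hsp : Real.sqrt Real.pi ≤ Real.pi := by
      nlinarith [Real.sq_sqrt hpi.le, sq_nonneg (Real.sqrt Real.pi - 1), Real.pi_gt_three]
    have hs21 : 1 ≤ Real.sqrt 2 := by nlinarith [h2s, Real.sqrt_nonneg 2]
    have hrw : (t ^ 3)⁻¹ * erfc z * (4 * Real.pi * (2 * Real.sqrt 2 * t ^ 3))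
        = 8 * Real.sqrt 2 * Real.pi * erfc z := by
      field_simp
      ring
    rw [hrw]
    have hcoef : Real.sqrt Real.pi / 2 ≤ 8 * Real.sqrt 2 * Real.pi := by nlinarith
    exact mul_le_mul_of_nonneg_right hcoef herfc0
  exact hchain.trans hfinal
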